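/- Let 0<2α<β≤1 and h∈Höl_β(X,d). Then the kernel K_{α,h}(x,y):=(h(x)−h(y))/d(x,y)^{d_f+2α} defines a bounded linear operator K_{α,h} on L²(X,μ) by K_{α,h}f(x)=∫_X K_{α,h}(x,y)f(y)dμ(y), and its operator norm satisfies ‖K_{α,h}‖ ≤ C·Höl_β(h) for a constant C independent of h. -/

import Mathlib

open MeasureTheory Metric ENNReal NNReal

noncomputable section

/-!
The kernel is antisymmetric, so by Schur's test the operator norm on `L²` is at most
`sup_x ∫ |K(x,y)| dμ(y)`. Hölder continuity gives `|K(x,y)| ≤ H d(x,y)^(β - 2α - d_f)`; on the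
dyadic annulus `D/2^(k+1) < d(x,y) ≤ D/2^k` (`D = diam X`), whose measure is `O((D/2^k)^d_f)` by
the upper Ahlfors bound, this integrates to `O(H 2^(-k(β - 2α)))`, a geometric series.
-/

section Schur

variable {α : Type*} [MeasurableSpace α] {μ : Measure α}

theorem sq_lintegral_mul_le {k g : α → ℝ≥0∞} (hk : AEMeasurable k μ) (hg : AEMeasurable g μ) :
    (∫⁻ a, k a * g a ∂μ) ^ 2 ≤ (∫⁻ a, k a ∂μ) * ∫⁻ a, k a * g a ^ 2 ∂μ := by
  have holder := lintegral_mul_norm_pow_le (g := fun a => k a * g a ^ 2) hk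
    (hk.mul (hg.pow_const 2)) (p := 1 / 2) (q := 1 / 2) (by norm_num) (by norm_num) (by norm_num)
  have hsqrt : ∀ a, k a ^ (1 / 2 : ℝ) * (k a * g a ^ 2) ^ (1 / 2 : ℝ) = k a * g a := by
    intro a
    rw [ENNReal.mul_rpow_of_nonneg _ _ (by norm_num), ← mul_assoc,
      ← ENNReal.rpow_add_of_nonneg _ _ (by norm_num) (by norm_num), ← ENNReal.rpow_natCast,
      ← ENNReal.rpow_mul]
    norm_num
  simp only [hsqrt] at holder
  calc (∫⁻ a, k a * g a ∂μ) ^ 2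
      ≤ ((∫⁻ a, k a ∂μ) ^ (1 / 2 : ℝ) * (∫⁻ a, k a * g a ^ 2 ∂μ) ^ (1 / 2 : ℝ)) ^ 2 := by
        gcongr
    _ = (∫⁻ a, k a ∂μ) * ∫⁻ a, k a * g a ^ 2 ∂μ := by
        rw [mul_pow, ← ENNReal.rpow_mul_natCast, ← ENNReal.rpow_mul_natCast]
        norm_num

variable [SFinite μ]

theorem lintegral_sq_lintegral_mul_le {k : α → α → ℝ≥0∞} (hk : Measurable (Function.uncurry k))
    {g : α → ℝ≥0∞} (hg : AEMeasurable g μ) {M : ℝ≥0∞}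
    (hrow : ∀ x, ∫⁻ y, k x y ∂μ ≤ M) (hcol : ∀ y, ∫⁻ x, k x y ∂μ ≤ M) :
    ∫⁻ x, (∫⁻ y, k x y * g y ∂μ) ^ 2 ∂μ ≤ M ^ 2 * ∫⁻ y, g y ^ 2 ∂μ := by
  have hkg : AEMeasurable (Function.uncurry fun x y => k x y * g y ^ 2) (μ.prod μ) :=
    hk.aemeasurable.mul (hg.pow_const 2).comp_snd
  calc ∫⁻ x, (∫⁻ y, k x y * g y ∂μ) ^ 2 ∂μ
      ≤ ∫⁻ x, M * ∫⁻ y, k x y * g y ^ 2 ∂μ ∂μ := by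
        refine lintegral_mono fun x => ?_
        have hkx : Measurable fun y => k x y := hk.comp measurable_prodMk_left
        grw [sq_lintegral_mul_le hkx.aemeasurable hg, hrow x]
    _ = M * ∫⁻ y, (∫⁻ x, k x y ∂μ) * g y ^ 2 ∂μ := by
        rw [lintegral_const_mul'' _ hkg.lintegral_prod_right, lintegral_lintegral_swap hkg]
        congr 1
        refine lintegral_congr fun y => ?_
        exact lintegral_mul_const _ (hk.comp measurable_prodMk_right)
    _ ≤ M * ∫⁻ y, M * g y ^ 2 ∂μ := by gcongr with y; exact hcol y
    _ = M ^ 2 * ∫⁻ y, g y ^ 2 ∂μ := by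
        rw [lintegral_const_mul'' _ (hg.pow_const 2), ← mul_assoc, sq]

theorem eLpNorm_two_integral_mul_le {K : α → α → ℝ} (hK : Measurable (Function.uncurry K))
    {M : ℝ≥0∞} (hrow : ∀ x, ∫⁻ y, ‖K x y‖ₑ ∂μ ≤ M) (hcol : ∀ y, ∫⁻ x, ‖K x y‖ₑ ∂μ ≤ M)
    {f : α → ℝ} (hf : AEMeasurable f μ) :
    eLpNorm (fun x => ∫ y, K x y * f y ∂μ) 2 μ ≤ M * eLpNorm f 2 μ := by
  have hsq : ∀ g : α → ℝ, eLpNorm g 2 μ ^ 2 = ∫⁻ x, ‖g x‖ₑ ^ 2 ∂μ := fun g => by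
    simpa using eLpNorm_nnreal_pow_eq_lintegral (f := g) (μ := μ) (p := 2) two_ne_zero
  rw [← ENNReal.pow_le_pow_left_iff two_ne_zero, mul_pow, hsq, hsq]
  calc ∫⁻ x, ‖∫ y, K x y * f y ∂μ‖ₑ ^ 2 ∂μ
      ≤ ∫⁻ x, (∫⁻ y, ‖K x y‖ₑ * ‖f y‖ₑ ∂μ) ^ 2 ∂μ := by
        refine lintegral_mono fun x => ?_
        grw [enorm_integral_le_lintegral_enorm]
        simp only [enorm_mul, le_rfl]
    _ ≤ M ^ 2 * ∫⁻ y, ‖f y‖ₑ ^ 2 ∂μ :=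
        lintegral_sq_lintegral_mul_le hK.enorm hf.enorm hrow hcol

theorem memLp_two_integral_mul {K : α → α → ℝ} (hK : Measurable (Function.uncurry K))
    {M : ℝ≥0∞} (hM : M ≠ ∞) (hrow : ∀ x, ∫⁻ y, ‖K x y‖ₑ ∂μ ≤ M)
    (hcol : ∀ y, ∫⁻ x, ‖K x y‖ₑ ∂μ ≤ M) {f : α → ℝ} (hf : MemLp f 2 μ) :
    MemLp (fun x => ∫ y, K x y * f y ∂μ) 2 μ :=
  ⟨(hK.aestronglyMeasurable.mul hf.1.comp_snd).integral_prod_right',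
    (eLpNorm_two_integral_mul_le hK hrow hcol hf.1.aemeasurable).trans_lt
      (ENNReal.mul_lt_top hM.lt_top hf.2)⟩

end Schur

theorem rpow_le_two_rpow_mul_rpow {d ρ s t : ℝ} (hs : 0 ≤ s) (hts : 0 ≤ t + s)
    (hρd : ρ / 2 < d) (hdρ : d ≤ ρ) : d ^ t ≤ 2 ^ s * ρ ^ t := by
  have hρ : 0 < ρ := by linarith
  have hd : 0 < d := by linarith
  calc d ^ t = d ^ (t + s) / d ^ s := by rw [Real.rpow_add hd]; field_simp
    _ ≤ ρ ^ (t + s) / (ρ / 2) ^ s := by gcongr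
    _ = 2 ^ s * ρ ^ t := by
        rw [Real.div_rpow hρ.le zero_le_two, Real.rpow_add hρ]
        field_simp

theorem div_two_pow_rpow {D a : ℝ} (hD : 0 ≤ D) (k : ℕ) :
    (D / 2 ^ k) ^ a = D ^ a * ((2 ^ a)⁻¹) ^ k := by
  rw [Real.div_rpow hD (by positivity), ← Real.rpow_pow_comm zero_le_two, inv_pow, div_eq_mul_inv]

section RieszPotential

variable {X : Type*} [MetricSpace X]

theorem compl_singleton_subset_iUnion_annulus [BoundedSpace X] (x : X) :
    ({x}ᶜ : Set X) ⊆ ⋃ k : ℕ, closedBall x (diam (Set.univ : Set X) / 2 ^ k) \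
      closedBall x (diam (Set.univ : Set X) / 2 ^ k / 2) := by
  intro y hy
  have hxy : 0 < dist x y := dist_pos.mpr (Ne.symm hy)
  have hyD : dist x y ≤ diam (Set.univ : Set X) :=
    dist_le_diam_of_mem (Bornology.IsBounded.all _) trivial trivial
  obtain ⟨k, hk, hk1⟩ := exists_nat_pow_near ((one_le_div hxy).mpr hyD) one_lt_two
  refine Set.mem_iUnion.mpr ⟨k, ?_, ?_⟩
  · rw [mem_closedBall, dist_comm, le_div_iff₀ (by positivity)]
    rw [le_div_iff₀ hxy] at hk
    linarith
  · rw [mem_closedBall, dist_comm, not_le, div_div, ← pow_succ, div_lt_iff₀ (by positivity)]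
    rwa [div_lt_iff₀ hxy, mul_comm] at hk1

variable [MeasurableSpace X] {μ : Measure X} {C s t : ℝ}

theorem measure_closedBall_le_of_le_diam [IsFiniteMeasure μ] (hD : 0 < diam (Set.univ : Set X))
    (hμ : ∀ (x : X) (r : ℝ), 0 ≤ r → r < diam (Set.univ : Set X) →
      (μ (closedBall x r)).toReal ≤ C * r ^ s)
    (x : X) {r : ℝ} (hr : 0 ≤ r) (hrD : r ≤ diam (Set.univ : Set X)) :
    μ (closedBall x r) ≤
      ENNReal.ofReal (max C ((μ Set.univ).toReal / diam (Set.univ : Set X) ^ s) * r ^ s) := by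
  rw [← ofReal_toReal (measure_ne_top μ _)]
  refine ofReal_le_ofReal ?_
  -- the Ahlfors bound is only available below the diameter; the ball of radius `diam X` is `X`
  rcases hrD.lt_or_eq with hrD | rfl
  · exact (hμ x r hr hrD).trans (by gcongr; exact le_max_left _ _)
  · have hDs : 0 < diam (Set.univ : Set X) ^ s := Real.rpow_pos_of_pos hD s
    calc (μ (closedBall x _)).toReal ≤ (μ Set.univ).toReal :=
          toReal_mono (measure_ne_top μ _) (measure_mono (Set.subset_univ _))
      _ = (μ Set.univ).toReal / diam (Set.univ : Set X) ^ s * diam (Set.univ : Set X) ^ s := by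
          field_simp
      _ ≤ _ := by gcongr; exact le_max_right _ _

theorem setLIntegral_annulus_dist_rpow_le [OpensMeasurableSpace X] (hs : 0 ≤ s)
    (hts : 0 ≤ t + s) {x : X} {ρ c : ℝ} (hρ : 0 < ρ)
    (hμρ : μ (closedBall x ρ) ≤ ENNReal.ofReal (c * ρ ^ s)) :
    ∫⁻ y in closedBall x ρ \ closedBall x (ρ / 2), ENNReal.ofReal (dist x y ^ t) ∂μ ≤
      ENNReal.ofReal (2 ^ s * c * ρ ^ (t + s)) := by
  have hpt : ∀ y ∈ closedBall x ρ \ closedBall x (ρ / 2),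
      ENNReal.ofReal (dist x y ^ t) ≤ ENNReal.ofReal (2 ^ s * ρ ^ t) := by
    rintro y ⟨hyρ, hyρ2⟩
    rw [mem_closedBall, dist_comm] at hyρ hyρ2
    exact ofReal_le_ofReal (rpow_le_two_rpow_mul_rpow hs hts (not_le.mp hyρ2) hyρ)
  calc ∫⁻ y in closedBall x ρ \ closedBall x (ρ / 2), ENNReal.ofReal (dist x y ^ t) ∂μ
      ≤ ∫⁻ _ in closedBall x ρ \ closedBall x (ρ / 2), ENNReal.ofReal (2 ^ s * ρ ^ t) ∂μ :=
        setLIntegral_mono' (measurableSet_closedBall.diff measurableSet_closedBall) hpt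
    _ ≤ ENNReal.ofReal (2 ^ s * ρ ^ t) * ENNReal.ofReal (c * ρ ^ s) := by
        rw [setLIntegral_const]
        gcongr
        exact (measure_mono Set.sdiff_subset).trans hμρ
    _ = ENNReal.ofReal (2 ^ s * c * ρ ^ (t + s)) := by
        rw [← ofReal_mul (by positivity), Real.rpow_add hρ]
        ring_nf

theorem exists_forall_lintegral_compl_singleton_dist_rpow_le [OpensMeasurableSpace X]
    [BoundedSpace X] [IsFiniteMeasure μ] (hs : 0 ≤ s) (hts : 0 < t + s)
    (hμ : ∀ (x : X) (r : ℝ), 0 ≤ r → r < diam (Set.univ : Set X) →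
      (μ (closedBall x r)).toReal ≤ C * r ^ s) :
    ∃ M : ℝ, 0 < M ∧ ∀ x : X, ∫⁻ y in {x}ᶜ, ENNReal.ofReal (dist x y ^ t) ∂μ ≤ ENNReal.ofReal M := by
  set D := diam (Set.univ : Set X)
  rcases (diam_nonneg : 0 ≤ D).eq_or_lt with hD | hD
  · refine ⟨1, one_pos, fun x => ?_⟩
    have hx : ({x}ᶜ : Set X) = ∅ := by
      refine Set.eq_empty_of_forall_notMem fun y hy => hy ?_
      have : dist x y ≤ 0 := hD ▸ dist_le_diam_of_mem (Bornology.IsBounded.all _) trivial trivial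
      exact (dist_le_zero.mp this).symm
    simp [hx]
  set c := 2 ^ s * max C ((μ Set.univ).toReal / D ^ s) * D ^ (t + s)
  set q : ℝ := (2 ^ (t + s))⁻¹
  have hq : q < 1 := inv_lt_one_of_one_lt₀ (Real.one_lt_rpow one_lt_two hts)
  have hq0 : 0 ≤ q := by positivity
  refine ⟨max (c * (1 - q)⁻¹) 1, by positivity, fun x => ?_⟩
  calc ∫⁻ y in {x}ᶜ, ENNReal.ofReal (dist x y ^ t) ∂μ
      ≤ ∫⁻ y in ⋃ k : ℕ, closedBall x (D / 2 ^ k) \ closedBall x (D / 2 ^ k / 2),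
          ENNReal.ofReal (dist x y ^ t) ∂μ :=
        lintegral_mono_set (compl_singleton_subset_iUnion_annulus x)
    _ ≤ ∑' k : ℕ, ∫⁻ y in closedBall x (D / 2 ^ k) \ closedBall x (D / 2 ^ k / 2),
          ENNReal.ofReal (dist x y ^ t) ∂μ := lintegral_iUnion_le _ _
    _ ≤ ∑' k : ℕ, ENNReal.ofReal (c * q ^ k) := by
        refine ENNReal.tsum_le_tsum fun k => ?_
        have hρ : 0 < D / 2 ^ k := by positivity
        refine (setLIntegral_annulus_dist_rpow_le hs hts.le hρ
          (measure_closedBall_le_of_le_diam hD hμ x hρ.le ?_)).trans_eq ?_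
        · exact div_le_self hD.le (one_le_pow₀ one_le_two)
        · rw [div_two_pow_rpow hD.le, ← mul_assoc]
    _ = ENNReal.ofReal (c * (1 - q)⁻¹) := by
        rw [← ofReal_tsum_of_nonneg (fun k => by positivity)
          ((summable_geometric_of_lt_one hq0 hq).mul_left c), _root_.tsum_mul_left,
          tsum_geometric_of_lt_one hq0 hq]
    _ ≤ ENNReal.ofReal (max (c * (1 - q)⁻¹) 1) := ofReal_le_ofReal (le_max_left _ _)

end RieszPotential

section HolderKernel

variable {X : Type*} [MetricSpace X]

def holderKernel (h : X → ℝ) (s : ℝ) (x y : X) : ℝ := (h x - h y) / dist x y ^ s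

variable {h : X → ℝ} {s : ℝ}

@[simp]
theorem holderKernel_self (x : X) : holderKernel h s x x = 0 := by
  simp [holderKernel]

theorem enorm_holderKernel_comm (x y : X) :
    ‖holderKernel h s x y‖ₑ = ‖holderKernel h s y x‖ₑ := by
  rw [holderKernel, holderKernel, dist_comm, ← enorm_neg, ← neg_div, neg_sub]

theorem measurable_holderKernel [MeasurableSpace X] [OpensMeasurableSpace X]
    [SecondCountableTopology X] (hh : Measurable h) :
    Measurable (Function.uncurry (holderKernel h s)) :=
  ((hh.comp measurable_fst).sub (hh.comp measurable_snd)).div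
    (continuous_dist.measurable.pow_const s)

theorem enorm_holderKernel_le {H r : ℝ≥0} (hh : HolderWith H r h) {x y : X} (hxy : x ≠ y) :
    ‖holderKernel h s x y‖ₑ ≤ H * ENNReal.ofReal (dist x y ^ ((r : ℝ) - s)) := by
  have hd : 0 < dist x y := dist_pos.mpr hxy
  rw [← ofReal_coe_nnreal, ← ofReal_mul H.coe_nonneg, holderKernel, Real.enorm_eq_ofReal_abs,
    abs_div, abs_of_pos (Real.rpow_pos_of_pos hd s), Real.rpow_sub hd, ← mul_div_assoc]
  gcongr
  simpa [Real.dist_eq] using hh.dist_le x y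

theorem lintegral_enorm_holderKernel_le [MeasurableSpace X] [OpensMeasurableSpace X]
    {μ : Measure X} {H r : ℝ≥0} (hh : HolderWith H r h) (x : X) :
    ∫⁻ y, ‖holderKernel h s x y‖ₑ ∂μ ≤
      H * ∫⁻ y in {x}ᶜ, ENNReal.ofReal (dist x y ^ ((r : ℝ) - s)) ∂μ := by
  rw [← lintegral_add_compl _ (measurableSet_singleton x), lintegral_singleton,
    holderKernel_self, enorm_zero, zero_mul, zero_add, ← lintegral_const_mul' _ _ coe_ne_top]
  exact setLIntegral_mono' (measurableSet_singleton x).compl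
    fun y hy => enorm_holderKernel_le hh (Ne.symm hy)

end HolderKernel

theorem statement7_general
    {X : Type*} [MetricSpace X] [CompactSpace X] [MeasurableSpace X] [BorelSpace X]
    (μ : Measure X) [IsFiniteMeasure μ]
    (df : ℝ) (hdf : 0 < df) (CA : ℝ)
    (hAhlfors : ∀ (x : X) (r : ℝ), 0 ≤ r → r < Metric.diam (Set.univ : Set X) →
      CA⁻¹ * r ^ df ≤ (μ (Metric.closedBall x r)).toReal ∧
        (μ (Metric.closedBall x r)).toReal ≤ CA * r ^ df)
    (α β : ℝ) (hα0 : 0 < α) (hαβ : 2 * α < β) :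
    ∃ C : ℝ, 0 < C ∧ ∀ (h : X → ℝ) (H : ℝ≥0), HolderWith H β.toNNReal h →
      ∀ f : X → ℝ, MemLp f 2 μ →
        MemLp (fun x => ∫ y, ((h x - h y) / dist x y ^ (df + 2 * α)) * f y ∂μ) 2 μ ∧
        eLpNorm (fun x => ∫ y, ((h x - h y) / dist x y ^ (df + 2 * α)) * f y ∂μ) 2 μ ≤
          ENNReal.ofReal (C * (H : ℝ)) * eLpNorm f 2 μ := by
  obtain ⟨M, hM0, hM⟩ := exists_forall_lintegral_compl_singleton_dist_rpow_le (μ := μ)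
    (t := β - (df + 2 * α)) hdf.le (by linarith) fun x r hr hrD => (hAhlfors x r hr hrD).2
  refine ⟨M, hM0, fun h H hH f hf => ?_⟩
  have hβ : (β.toNNReal : ℝ) = β := Real.coe_toNNReal β (by linarith)
  have hK : Measurable (Function.uncurry (holderKernel h (df + 2 * α))) :=
    measurable_holderKernel (hH.continuous (Real.toNNReal_pos.mpr (by linarith))).measurable
  have hrow : ∀ x, ∫⁻ y, ‖holderKernel h (df + 2 * α) x y‖ₑ ∂μ ≤ ENNReal.ofReal (M * H) := by
    intro x
    rw [ofReal_mul hM0.le, ofReal_coe_nnreal, mul_comm (ENNReal.ofReal M)]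
    grw [lintegral_enorm_holderKernel_le hH x, hβ, hM x]
  have hcol : ∀ y, ∫⁻ x, ‖holderKernel h (df + 2 * α) x y‖ₑ ∂μ ≤ ENNReal.ofReal (M * H) :=
    fun y => by simpa only [enorm_holderKernel_comm] using hrow y
  exact ⟨memLp_two_integral_mul hK ofReal_ne_top hrow hcol hf,
    eLpNorm_two_integral_mul_le hK hrow hcol hf.1.aemeasurable⟩

/-- For `0<2α<β≤1` and `h ∈ Höl_β(X,d)`, the kernel
`K_{α,h}(x,y) = (h(x)−h(y))/d(x,y)^{d_f+2α}` defines a bounded operator on `L²(X,μ)`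
with operator norm `≤ C·Höl_β(h)`. -/
theorem statement7
    {X : Type*} [MetricSpace X] [CompactSpace X] [MeasurableSpace X] [BorelSpace X]
    (μ : Measure X) [IsFiniteMeasure μ]
    (df : ℝ) (hdf : 0 < df) (CA : ℝ) (hCA : 1 ≤ CA)
    (hAhlfors : ∀ (x : X) (r : ℝ), 0 ≤ r → r < Metric.diam (Set.univ : Set X) →
      CA⁻¹ * r ^ df ≤ (μ (Metric.closedBall x r)).toReal ∧
        (μ (Metric.closedBall x r)).toReal ≤ CA * r ^ df)
    (α β : ℝ) (hα0 : 0 < α) (hαβ : 2 * α < β) (hβ : β ≤ 1) :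
    ∃ C : ℝ, 0 < C ∧ ∀ (h : X → ℝ) (H : ℝ≥0), HolderWith H β.toNNReal h →
      ∀ f : X → ℝ, MemLp f 2 μ →
        MemLp (fun x => ∫ y, ((h x - h y) / dist x y ^ (df + 2 * α)) * f y ∂μ) 2 μ ∧
        eLpNorm (fun x => ∫ y, ((h x - h y) / dist x y ^ (df + 2 * α)) * f y ∂μ) 2 μ ≤
          ENNReal.ofReal (C * (H : ℝ)) * eLpNorm f 2 μ :=
  statement7_general μ df hdf CA hAhlfors α β hα0 hαβ
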